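/- arXiv:2208.03113 — 2 statements merged into one kernel-verified Lean document; each statement's English description precedes it below -/
import Mathlib

section
/- Lemma (G_{sign,perm}-alignment on the Boolean hypercube, Lemma 3.2). Let d ≥ 1 and f : H_d → ℝ. Let s be uniform on H_d, σ uniform on the symmetric group S_d, independent, and x uniform on H_d. Then sup over h : H_d → ℝ with ‖h‖²_{L²(H_d)} = 1 of E_{s,σ}[ ( E_x[ f(s ⊙ σ(x)) h(x) ] )² ] equals max_{0 ≤ k ≤ d} C(d,k)^{−1} Σ_{S ⊆ [d], |S| = k} f̂(S)², where C(d,k) is the binomial coefficient; moreover the supremum is attained by h = χ_S for a set S realizing the maximum. -/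
open scoped BigOperators

noncomputable section

/-- A Boolean bit viewed as a sign in `{+1, -1}` (`true ↦ +1`). -/
def sgn (b : Bool) : ℝ := if b then 1 else -1

/-- Expectation over the uniform measure on the hypercube `H_d = {+1,-1}^d`. -/
def hcE {d : ℕ} (f : (Fin d → Bool) → ℝ) : ℝ := (∑ x : Fin d → Bool, f x) / 2 ^ d

/-- The parity (Fourier character) `χ_S(x) = ∏_{i∈S} x_i`. -/
def chi {d : ℕ} (S : Finset (Fin d)) (x : Fin d → Bool) : ℝ := ∏ i ∈ S, sgn (x i)

/-- The Fourier coefficient `f̂(S) = E_{x∼H_d}[f(x)χ_S(x)]`. -/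
def fourierCoef {d : ℕ} (f : (Fin d → Bool) → ℝ) (S : Finset (Fin d)) : ℝ :=
  hcE fun x => f x * chi S x

/-- The `G_{sign,perm}`-alignment functional evaluated at a candidate `h`:
`E_{s,σ}[(E_x[f(s ⊙ σ(x)) h(x)])²]`, with `s` uniform on `H_d` and `σ` uniform on the
symmetric group. The coordinatewise sign product is implemented on Booleans by
`s i == x (σ i)` (with `true ↦ +1`). -/
def alignVal {d : ℕ} (f h : (Fin d → Bool) → ℝ) : ℝ :=
  (∑ s : Fin d → Bool, ∑ σ : Equiv.Perm (Fin d),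
      (hcE fun x => f (fun i => s i == x (σ i)) * h x) ^ 2)
    / (2 ^ d * (Fintype.card (Equiv.Perm (Fin d)) : ℝ))

/-- The Fourier weight of `f` at level `k`, normalized: `C(d,k)⁻¹ Σ_{|S|=k} f̂(S)²`. -/
def levelWeight {d : ℕ} (f : (Fin d → Bool) → ℝ) (k : ℕ) : ℝ :=
  ((d.choose k : ℝ))⁻¹ *
    ∑ S ∈ Finset.univ.filter (fun S : Finset (Fin d) => S.card = k), fourierCoef f S ^ 2

section aux
variable {d : ℕ}

lemma sgn_beq (a b : Bool) : sgn (a == b) = sgn a * sgn b := by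
  cases a <;> cases b <;> simp [sgn]

lemma hcE_sum {ι : Type*} (A : Finset ι) (g : ι → (Fin d → Bool) → ℝ) :
    hcE (fun x => ∑ t ∈ A, g t x) = ∑ t ∈ A, hcE (g t) := by
  unfold hcE
  rw [Finset.sum_comm, Finset.sum_div]

lemma hcE_const_mul (c : ℝ) (g : (Fin d → Bool) → ℝ) :
    hcE (fun x => c * g x) = c * hcE g := by
  unfold hcE
  rw [← Finset.mul_sum, mul_div_assoc]

lemma hcE_chi_mul_chi (S T : Finset (Fin d)) :
    hcE (fun x => chi S x * chi T x) = if S = T then 1 else 0 := by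
  have key : ∀ x : Fin d → Bool, chi S x * chi T x
      = ∏ i : Fin d, ((if i ∈ S then sgn (x i) else 1) * (if i ∈ T then sgn (x i) else 1)) := by
    intro x
    rw [Finset.prod_mul_distrib, Fintype.prod_ite_mem, Fintype.prod_ite_mem]
    rfl
  unfold hcE
  simp only [key]
  rw [← Fintype.piFinset_univ, ← Finset.prod_univ_sum (fun _ : Fin d => (Finset.univ : Finset Bool))
      (fun i b => (if i ∈ S then sgn b else 1) * (if i ∈ T then sgn b else 1))]
  have fact : ∀ i : Fin d,
      (∑ b : Bool, ((if i ∈ S then sgn b else 1) * (if i ∈ T then sgn b else 1)))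
        = if (i ∈ S ↔ i ∈ T) then 2 else 0 := by
    intro i
    by_cases hS : i ∈ S <;> by_cases hT : i ∈ T <;>
      simp [hS, hT, sgn, Fintype.sum_bool] <;> norm_num
  simp only [fact]
  by_cases h : S = T
  · subst h
    simp only [iff_self, if_true, Finset.prod_const, Finset.card_univ, Fintype.card_fin]
    simp
  · rw [if_neg h]
    obtain ⟨i, hi⟩ : ∃ i, ¬ (i ∈ S ↔ i ∈ T) := by
      by_contra hc
      push_neg at hc
      exact h (Finset.ext fun i => hc i)
    rw [Finset.prod_eq_zero (Finset.mem_univ i) (by rw [if_neg hi]), zero_div]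

lemma delta_sum (x y : Fin d → Bool) :
    ∑ S : Finset (Fin d), chi S x * chi S y = if x = y then (2:ℝ)^d else 0 := by
  have key : ∀ S : Finset (Fin d), chi S x * chi S y = ∏ i ∈ S, (sgn (x i) * sgn (y i)) := by
    intro S; rw [Finset.prod_mul_distrib]; rfl
  simp only [key]
  have := Finset.prod_add (fun i : Fin d => sgn (x i) * sgn (y i)) (fun _ => (1:ℝ)) Finset.univ
  simp only [Finset.prod_const_one, mul_one, Finset.powerset_univ] at this
  rw [← this]
  by_cases h : x = y
  · subst h
    rw [if_pos rfl]
    have : ∀ i : Fin d, sgn (x i) * sgn (x i) + 1 = 2 := by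
      intro i; cases x i <;> simp [sgn] <;> ring
    simp only [this, Finset.prod_const, Finset.card_univ, Fintype.card_fin]
  · rw [if_neg h]
    obtain ⟨i, hi⟩ : ∃ i, x i ≠ y i := by
      by_contra hc; push_neg at hc; exact h (funext hc)
    apply Finset.prod_eq_zero (Finset.mem_univ i)
    cases hx : x i <;> cases hy : y i <;> simp [hx, hy, sgn] at hi ⊢ <;> norm_num

lemma fourier_inversion (f : (Fin d → Bool) → ℝ) (x : Fin d → Bool) :
    ∑ S : Finset (Fin d), fourierCoef f S * chi S x = f x := by
  unfold fourierCoef hcE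
  have step : ∀ S : Finset (Fin d),
      ((∑ y : Fin d → Bool, f y * chi S y) / 2 ^ d) * chi S x
        = (∑ y : Fin d → Bool, f y * (chi S y * chi S x)) / 2 ^ d := by
    intro S
    rw [div_mul_eq_mul_div, Finset.sum_mul]
    congr 1
    exact Finset.sum_congr rfl fun y _ => by ring
  simp only [step]
  rw [← Finset.sum_div, Finset.sum_comm]
  have inner : ∀ y : Fin d → Bool,
      (∑ S : Finset (Fin d), f y * (chi S y * chi S x)) = f y * (if y = x then (2:ℝ)^d else 0) := by
    intro y
    rw [← Finset.mul_sum, delta_sum]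
  simp only [inner, mul_ite, mul_zero]
  rw [Finset.sum_ite_eq' Finset.univ x (fun y => f y * 2^d)]
  simp only [Finset.mem_univ, if_true]
  field_simp

lemma hcE_comb_sq (a : Finset (Fin d) → ℝ) :
    hcE (fun s => (∑ T : Finset (Fin d), a T * chi T s)^2)
      = ∑ T : Finset (Fin d), (a T)^2 := by
  have expand : ∀ s : Fin d → Bool,
      (∑ T : Finset (Fin d), a T * chi T s)^2
        = ∑ T : Finset (Fin d), ∑ U : Finset (Fin d), (a T * a U) * (chi T s * chi U s) := by
    intro s
    rw [sq, Finset.sum_mul_sum]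
    exact Finset.sum_congr rfl fun T _ => Finset.sum_congr rfl fun U _ => by ring
  simp only [expand]
  rw [hcE_sum]
  apply Finset.sum_congr rfl
  intro T _
  rw [hcE_sum]
  have : ∀ U : Finset (Fin d), hcE (fun s => (a T * a U) * (chi T s * chi U s))
      = (a T * a U) * (if T = U then 1 else 0) := by
    intro U
    rw [hcE_const_mul, hcE_chi_mul_chi]
  simp only [this, mul_ite, mul_one, mul_zero]
  rw [Finset.sum_ite_eq Finset.univ T (fun U => a T * a U)]
  simp [sq]

lemma parseval (h : (Fin d → Bool) → ℝ) :
    hcE (fun x => h x ^ 2) = ∑ S : Finset (Fin d), fourierCoef h S ^ 2 := by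
  have : (fun x => h x ^ 2) = fun x => (∑ S : Finset (Fin d), fourierCoef h S * chi S x)^2 := by
    funext x; rw [fourier_inversion]
  rw [this, hcE_comb_sq]

lemma fourierCoef_chi (S U : Finset (Fin d)) :
    fourierCoef (chi S) U = if S = U then 1 else 0 := by
  unfold fourierCoef
  exact hcE_chi_mul_chi S U

end aux

section perm
variable {d : ℕ}

lemma exists_perm_map (T T' : Finset (Fin d)) (hc : T.card = T'.card) :
    ∃ τ : Equiv.Perm (Fin d), T.map τ.toEmbedding = T' := by
  classical
  have e : {x // x ∈ T} ≃ {x // x ∈ T'} := Fintype.equivOfCardEq (by simpa using hc)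
  refine ⟨e.extendSubtype, ?_⟩
  ext j
  simp only [Finset.mem_map, Equiv.coe_toEmbedding]
  constructor
  · rintro ⟨i, hi, rfl⟩
    exact e.extendSubtype_mem i hi
  · intro hj
    refine ⟨e.extendSubtype.symm j, ?_, by simp⟩
    by_contra hmem
    exact e.extendSubtype_not_mem _ hmem (by simpa using hj)

lemma map_map_perm (T : Finset (Fin d)) (τ σ : Equiv.Perm (Fin d)) :
    (T.map τ.toEmbedding).map σ.toEmbedding = T.map (σ * τ).toEmbedding := by
  rw [Finset.map_map]
  rfl

lemma G_const (F : Finset (Fin d) → ℝ) {T T' : Finset (Fin d)} (hc : T.card = T'.card) :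
    ∑ σ : Equiv.Perm (Fin d), F (T'.map σ.toEmbedding)
      = ∑ σ : Equiv.Perm (Fin d), F (T.map σ.toEmbedding) := by
  obtain ⟨τ, hτ⟩ := exists_perm_map T T' hc
  rw [← hτ]
  simp only [map_map_perm]
  exact Fintype.sum_equiv (Equiv.mulRight τ) _ _ (fun σ => rfl)

lemma sum_card_map (F : Finset (Fin d) → ℝ) (σ : Equiv.Perm (Fin d)) (k : ℕ) :
    ∑ U ∈ Finset.univ.filter (fun U : Finset (Fin d) => U.card = k), F (U.map σ.toEmbedding)
      = ∑ U ∈ Finset.univ.filter (fun U : Finset (Fin d) => U.card = k), F U := by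
  apply Finset.sum_nbij' (i := fun U => U.map σ.toEmbedding) (j := fun U => U.map σ.symm.toEmbedding)
  · intro U hU
    simp only [Finset.mem_filter, Finset.mem_univ, true_and] at hU ⊢
    rw [Finset.card_map]; exact hU
  · intro U hU
    simp only [Finset.mem_filter, Finset.mem_univ, true_and] at hU ⊢
    rw [Finset.card_map]; exact hU
  · intro U _
    rw [map_map_perm]
    ext j; simp [Equiv.Perm.mul_def]
  · intro U _
    rw [map_map_perm]
    ext j; simp [Equiv.Perm.mul_def]
  · intro U _
    rfl

lemma card_filter_card (k : ℕ) :
    (Finset.univ.filter (fun U : Finset (Fin d) => U.card = k)).card = d.choose k := by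
  have : Finset.univ.filter (fun U : Finset (Fin d) => U.card = k)
      = Finset.powersetCard k (Finset.univ : Finset (Fin d)) := by
    ext U
    simp [Finset.mem_powersetCard]
  rw [this, Finset.card_powersetCard, Finset.card_univ, Fintype.card_fin]

lemma G_value (F : Finset (Fin d) → ℝ) (T : Finset (Fin d)) :
    (d.choose T.card : ℝ) * ∑ σ : Equiv.Perm (Fin d), F (T.map σ.toEmbedding)
      = (Fintype.card (Equiv.Perm (Fin d)) : ℝ)
        * ∑ U ∈ Finset.univ.filter (fun U : Finset (Fin d) => U.card = T.card), F U := by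
  have lhs : ∑ T' ∈ Finset.univ.filter (fun U : Finset (Fin d) => U.card = T.card),
      (∑ σ : Equiv.Perm (Fin d), F (T'.map σ.toEmbedding))
      = (d.choose T.card : ℝ) * ∑ σ : Equiv.Perm (Fin d), F (T.map σ.toEmbedding) := by
    rw [Finset.sum_congr rfl (fun T' hT' => G_const F (by
      simp only [Finset.mem_filter] at hT'; exact (hT'.2).symm))]
    rw [Finset.sum_const, card_filter_card, nsmul_eq_mul]
  rw [← lhs, Finset.sum_comm]
  rw [Finset.sum_congr rfl (fun σ _ => sum_card_map F σ T.card)]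
  rw [Finset.sum_const, Finset.card_univ, nsmul_eq_mul]

end perm

section main
variable {d : ℕ}

lemma chi_prod (T : Finset (Fin d)) (σ : Equiv.Perm (Fin d)) (s x : Fin d → Bool) :
    chi T (fun i => s i == x (σ i)) = chi T s * chi (T.map σ.toEmbedding) x := by
  unfold chi
  rw [Finset.prod_map, ← Finset.prod_mul_distrib]
  exact Finset.prod_congr rfl fun i _ => sgn_beq _ _

lemma inner_eq (f h : (Fin d → Bool) → ℝ) (s : Fin d → Bool) (σ : Equiv.Perm (Fin d)) :
    (hcE fun x => f (fun i => s i == x (σ i)) * h x)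
      = ∑ T : Finset (Fin d),
          (fourierCoef f T * fourierCoef h (T.map σ.toEmbedding)) * chi T s := by
  have pt : ∀ x, f (fun i => s i == x (σ i)) * h x
      = ∑ T : Finset (Fin d),
          (fourierCoef f T * chi T s) * (h x * chi (T.map σ.toEmbedding) x) := by
    intro x
    conv_lhs => rw [← fourier_inversion f (fun i => s i == x (σ i))]
    rw [Finset.sum_mul]
    refine Finset.sum_congr rfl fun T _ => ?_
    rw [chi_prod]
    ring
  simp only [pt]
  rw [hcE_sum]
  refine Finset.sum_congr rfl fun T _ => ?_
  rw [hcE_const_mul]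
  unfold fourierCoef
  ring

lemma hcE_inner_sq (f h : (Fin d → Bool) → ℝ) (σ : Equiv.Perm (Fin d)) :
    hcE (fun s => (hcE fun x => f (fun i => s i == x (σ i)) * h x) ^ 2)
      = ∑ T : Finset (Fin d),
          (fourierCoef f T * fourierCoef h (T.map σ.toEmbedding))^2 := by
  simp only [inner_eq f h _ σ]
  exact hcE_comb_sq _

lemma sum_eq_hcE (g : (Fin d → Bool) → ℝ) :
    ∑ x : Fin d → Bool, g x = 2^d * hcE g := by
  unfold hcE; field_simp

/-- The level-`k` Fourier mass of `h`. -/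
def levelMass (h : (Fin d → Bool) → ℝ) (k : ℕ) : ℝ :=
  ∑ U ∈ Finset.univ.filter (fun U : Finset (Fin d) => U.card = k), fourierCoef h U ^ 2

lemma levelMass_nonneg (h : (Fin d → Bool) → ℝ) (k : ℕ) : 0 ≤ levelMass h k :=
  Finset.sum_nonneg fun U _ => sq_nonneg _

lemma sum_levelMass (h : (Fin d → Bool) → ℝ) :
    ∑ k ∈ Finset.range (d+1), levelMass h k = hcE (fun x => h x ^ 2) := by
  rw [parseval]
  unfold levelMass
  exact Finset.sum_fiberwise_of_maps_to
    (fun T _ => Finset.mem_range.mpr (Nat.lt_succ_of_le (by simpa using Finset.card_le_univ T)))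
    (fun T => fourierCoef h T ^ 2)

lemma alignVal_formula (f h : (Fin d → Bool) → ℝ) :
    alignVal f h
      = ∑ k ∈ Finset.range (d+1), levelWeight f k * levelMass h k := by
  have cardT_le : ∀ T : Finset (Fin d), T.card ≤ d := fun T => by
    simpa using Finset.card_le_univ T
  have hC : ∀ T : Finset (Fin d), (d.choose T.card : ℝ) ≠ 0 := fun T =>
    Nat.cast_ne_zero.mpr (Nat.choose_pos (cardT_le T)).ne'
  have hP : (Fintype.card (Equiv.Perm (Fin d)) : ℝ) ≠ 0 :=
    Nat.cast_ne_zero.mpr Fintype.card_pos.ne'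
  have h2 : ((2:ℝ)^d) ≠ 0 := by positivity
  unfold alignVal
  rw [Finset.sum_comm]
  have inner_s : ∀ σ : Equiv.Perm (Fin d),
      ∑ s : Fin d → Bool, (hcE fun x => f (fun i => s i == x (σ i)) * h x) ^ 2
        = 2^d * ∑ T : Finset (Fin d),
            (fourierCoef f T * fourierCoef h (T.map σ.toEmbedding))^2 := by
    intro σ
    rw [sum_eq_hcE, hcE_inner_sq]
  simp only [inner_s]
  rw [← Finset.mul_sum, Finset.sum_comm]
  have per_T : ∀ T : Finset (Fin d),
      ∑ σ : Equiv.Perm (Fin d), (fourierCoef f T * fourierCoef h (T.map σ.toEmbedding))^2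
        = (Fintype.card (Equiv.Perm (Fin d)) : ℝ)
            * (fourierCoef f T ^ 2 * ((d.choose T.card : ℝ)⁻¹ * levelMass h T.card)) := by
    intro T
    have hGv := G_value (fun U => fourierCoef h U ^ 2) T
    have hG : ∑ σ : Equiv.Perm (Fin d), fourierCoef h (T.map σ.toEmbedding) ^ 2
        = (d.choose T.card : ℝ)⁻¹
            * ((Fintype.card (Equiv.Perm (Fin d)) : ℝ) * levelMass h T.card) := by
      rw [eq_inv_mul_iff_mul_eq₀ (hC T)]
      exact hGv
    simp only [mul_pow]
    rw [← Finset.mul_sum, hG]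
    ring
  simp only [per_T]
  rw [← Finset.mul_sum]
  have fib : ∑ T : Finset (Fin d),
      fourierCoef f T ^ 2 * ((d.choose T.card : ℝ)⁻¹ * levelMass h T.card)
        = ∑ k ∈ Finset.range (d+1), levelWeight f k * levelMass h k := by
    rw [← Finset.sum_fiberwise_of_maps_to
      (fun T _ => Finset.mem_range.mpr (Nat.lt_succ_of_le (cardT_le T)))
      (fun T : Finset (Fin d) =>
        fourierCoef f T ^ 2 * ((d.choose T.card : ℝ)⁻¹ * levelMass h T.card))]
    refine Finset.sum_congr rfl fun k _ => ?_
    have : ∀ T ∈ Finset.univ.filter (fun T : Finset (Fin d) => T.card = k),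
        fourierCoef f T ^ 2 * ((d.choose T.card : ℝ)⁻¹ * levelMass h T.card)
          = ((d.choose k : ℝ)⁻¹ * levelMass h k) * fourierCoef f T ^ 2 := by
      intro T hT
      simp only [Finset.mem_filter] at hT
      rw [hT.2]
      ring
    rw [Finset.sum_congr rfl this, ← Finset.mul_sum]
    unfold levelWeight
    ring
  rw [fib]
  field_simp

end main

/-- **Lemma 3.2 (`G_{sign,perm}`-alignment on the Boolean hypercube).**
The supremum over unit-norm `h` of `E_{s,σ}[(E_x[f(s⊙σ(x))h(x)])²]` equals
`max_{0 ≤ k ≤ d} C(d,k)⁻¹ Σ_{|S|=k} f̂(S)²`, and it is attained by `h = χ_{S₀}` for a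
set `S₀` realizing the maximum. -/
theorem stmt_4 {d : ℕ} (hd : 1 ≤ d) (f : (Fin d → Bool) → ℝ) :
    sSup {r : ℝ | ∃ h : (Fin d → Bool) → ℝ, hcE (fun x => h x ^ 2) = 1 ∧ r = alignVal f h}
        = (Finset.range (d + 1)).sup' ⟨0, Finset.mem_range.mpr d.succ_pos⟩
            (levelWeight f)
      ∧ ∃ S₀ : Finset (Fin d),
          levelWeight f S₀.card
              = (Finset.range (d + 1)).sup' ⟨0, Finset.mem_range.mpr d.succ_pos⟩
                  (levelWeight f)
            ∧ alignVal f (chi S₀)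
              = (Finset.range (d + 1)).sup' ⟨0, Finset.mem_range.mpr d.succ_pos⟩
                  (levelWeight f) := by
  classical
  set M := (Finset.range (d + 1)).sup' ⟨0, Finset.mem_range.mpr d.succ_pos⟩ (levelWeight f)
    with hMdef
  obtain ⟨k, hk_mem, hk⟩ :=
    Finset.exists_mem_eq_sup' (⟨0, Finset.mem_range.mpr d.succ_pos⟩ :
      (Finset.range (d + 1)).Nonempty) (levelWeight f)
  have hk_le : k ≤ d := Nat.lt_succ_iff.mp (Finset.mem_range.mp hk_mem)
  obtain ⟨S₀, _, hS₀card⟩ :=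
    Finset.exists_subset_card_eq (s := (Finset.univ : Finset (Fin d))) (n := k)
      (by simpa using hk_le)
  have lm_chi : ∀ j : ℕ, levelMass (chi S₀) j = if S₀.card = j then 1 else 0 := by
    intro j
    unfold levelMass
    have hpt : ∀ U : Finset (Fin d),
        fourierCoef (chi S₀) U ^ 2 = if S₀ = U then 1 else 0 := by
      intro U
      rw [fourierCoef_chi]
      split <;> norm_num
    rw [Finset.sum_congr rfl fun U _ => hpt U]
    rw [Finset.sum_ite_eq (Finset.univ.filter (fun U : Finset (Fin d) => U.card = j)) S₀
      (fun _ => (1:ℝ))]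
    simp [Finset.mem_filter]
  have norm_chi : hcE (fun x => chi S₀ x ^ 2) = 1 := by
    have hsq : (fun x : Fin d → Bool => chi S₀ x ^ 2)
        = fun x => chi S₀ x * chi S₀ x := by
      funext x; ring
    rw [hsq, hcE_chi_mul_chi, if_pos rfl]
  have align_eq : alignVal f (chi S₀) = levelWeight f S₀.card := by
    rw [alignVal_formula]
    simp only [lm_chi]
    have hpt : ∀ j ∈ Finset.range (d + 1),
        levelWeight f j * (if S₀.card = j then 1 else 0)
          = if S₀.card = j then levelWeight f j else 0 := by
      intro j _
      split <;> ring
    rw [Finset.sum_congr rfl hpt,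
      Finset.sum_ite_eq (Finset.range (d + 1)) S₀.card (levelWeight f),
      if_pos (Finset.mem_range.mpr (Nat.lt_succ_of_le (by rw [hS₀card]; exact hk_le)))]
  have lv_eq : levelWeight f S₀.card = M := by
    rw [hS₀card, ← hk]
  have align_eq_M : alignVal f (chi S₀) = M := align_eq.trans lv_eq
  have ub : ∀ h : (Fin d → Bool) → ℝ, hcE (fun x => h x ^ 2) = 1 → alignVal f h ≤ M := by
    intro h hnorm
    rw [alignVal_formula]
    calc ∑ j ∈ Finset.range (d + 1), levelWeight f j * levelMass h j
        ≤ ∑ j ∈ Finset.range (d + 1), M * levelMass h j := by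
          refine Finset.sum_le_sum fun j hj => ?_
          exact mul_le_mul_of_nonneg_right (Finset.le_sup' (levelWeight f) hj)
            (levelMass_nonneg h j)
      _ = M := by rw [← Finset.mul_sum, sum_levelMass, hnorm, mul_one]
  refine ⟨?_, S₀, lv_eq, align_eq_M⟩
  apply IsGreatest.csSup_eq
  constructor
  · exact ⟨chi S₀, norm_chi, align_eq_M.symm⟩
  · rintro r ⟨h, hn, rfl⟩
    exact ub h hn

end
end

section
/- Claim (random sparse sign features correlate with every degree-s Fourier level; proof-faithful version of the claim in Lemma D.3). Let d ≥ 1, f : H_d → ℝ, s ∈ {0,1,…,d}, and p = s/d. Let w ∈ ℝ^d be random with i.i.d. coordinates taking value 0 with probability 1−p and values +1, −1 each with probability p/2, and let σ : ℝ → ℝ be given by σ(z) = 1 for −0.5 ≤ z ≤ 1.5 and σ(z) = 0 otherwise (so for integer arguments, σ(z) = 1 iff z ∈ {0,1}). Then E_w[ ( E_{x∼H_d}[ f(x)·σ(⟨w,x⟩) ] )² ] ≥ (d+1)^{−4}·C(d,s)^{−2}·Σ_{S ⊆ [d], |S| = s} f̂(S)², where C(d,s) is the binomial coefficient. (The paper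 states this with constant d^{−4} in place of (d+1)^{−4}.) -/
open scoped BigOperators

noncomputable section

open MeasureTheory

/-- The bump activation `σ(z) = 1` for `−0.5 ≤ z ≤ 1.5` and `σ(z) = 0` otherwise. -/
def bump (z : ℝ) : ℝ := if -0.5 ≤ z ∧ z ≤ 1.5 then 1 else 0

/-- The law of a single coordinate of the random sparse sign vector `w`: value `0` with
probability `1 − p`, and values `+1`, `−1` each with probability `p/2`. -/
def coordLaw (p : ℝ) : Measure ℝ :=
  ENNReal.ofReal (1 - p) • Measure.dirac 0
    + ENNReal.ofReal (p / 2) • Measure.dirac 1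
    + ENNReal.ofReal (p / 2) • Measure.dirac (-1)

section Aux

namespace Stmt12

variable {d : ℕ}

lemma sgn_pow_two (b : Bool) : sgn b ^ 2 = 1 := by cases b <;> norm_num [sgn]

lemma sgn_beq (a b : Bool) : sgn (a == b) = sgn a * sgn b := by
  cases a <;> cases b <;> norm_num [sgn]

lemma chi_sq (S : Finset (Fin d)) (x : Fin d → Bool) : chi S x ^ 2 = 1 := by
  rw [chi, ← Finset.prod_pow]
  exact Finset.prod_eq_one fun j _ => sgn_pow_two (x j)

/-- The atom `w ∈ {-1,0,1}^d` with support `S` and signs given by `ε`. -/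
def pt (S : Finset (Fin d)) (ε : Fin d → Bool) : Fin d → ℝ :=
  fun j => if j ∈ S then sgn (ε j) else 0

/-- Canonical sign patterns: `true` off `S`. -/
def CS (S : Finset (Fin d)) : Finset (Fin d → Bool) :=
  Finset.univ.filter fun ε => ∀ j ∉ S, ε j = true

lemma mem_CS {S : Finset (Fin d)} {ε : Fin d → Bool} :
    ε ∈ CS S ↔ ∀ j ∉ S, ε j = true := by simp [CS]

lemma sum_pt (S : Finset (Fin d)) (ε x : Fin d → Bool) :
    ∑ j, pt S ε j * sgn (x j) = ∑ j ∈ S, sgn (ε j) * sgn (x j) := by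
  rw [← Finset.sum_subset (Finset.subset_univ S) (fun j _ hj => by simp [pt, hj])]
  exact Finset.sum_congr rfl fun j hj => by simp [pt, hj]

lemma bump_nat (s t : ℕ) : bump ((s : ℝ) - 2 * t) = if t = s / 2 then 1 else 0 := by
  have hiff : (-0.5 ≤ (s : ℝ) - 2 * t ∧ (s : ℝ) - 2 * t ≤ 1.5) ↔ t = s / 2 := by
    constructor
    · rintro ⟨h1, h2⟩
      have ha : 2 * t ≤ s := by
        by_contra hc
        push_neg at hc
        have : (s : ℝ) + 1 ≤ 2 * (t : ℝ) := by exact_mod_cast hc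
        linarith
      have hb : s ≤ 2 * t + 1 := by
        by_contra hc
        push_neg at hc
        have : 2 * (t : ℝ) + 2 ≤ (s : ℝ) := by exact_mod_cast hc
        linarith
      omega
    · intro h
      subst h
      have h1 : 2 * (s / 2) + s % 2 = s := Nat.div_add_mod s 2
      have h2 : s % 2 ≤ 1 := Nat.le_of_lt_succ (Nat.mod_lt s (by norm_num))
      have hr : (s : ℝ) = 2 * ((s / 2 : ℕ) : ℝ) + ((s % 2 : ℕ) : ℝ) := by exact_mod_cast h1.symm
      have hr2 : ((s % 2 : ℕ) : ℝ) ≤ 1 := by exact_mod_cast h2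
      have hr3 : (0 : ℝ) ≤ ((s % 2 : ℕ) : ℝ) := Nat.cast_nonneg _
      constructor <;> [linarith; linarith]
  rw [bump, if_congr hiff rfl rfl]

end Stmt12

namespace Stmt12
variable {d : ℕ}

lemma sumsgn {S T : Finset (Fin d)} (hT : T ⊆ S) (u : Fin d → Bool)
    (hu : ∀ j ∈ S, (u j = false ↔ j ∈ T)) :
    ∑ j ∈ S, sgn (u j) = (S.card : ℝ) - 2 * T.card := by
  classical
  have h1 : ∑ j ∈ S, sgn (u j) = ∑ j ∈ S, (if j ∈ T then (-1 : ℝ) else 1) := by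
    refine Finset.sum_congr rfl fun j hj => ?_
    by_cases h : j ∈ T
    · rw [if_pos h]
      have : u j = false := (hu j hj).mpr h
      simp [sgn, this]
    · rw [if_neg h]
      have : u j ≠ false := fun hf => h ((hu j hj).mp hf)
      have : u j = true := by simpa using this
      simp [sgn, this]
  rw [h1, Finset.sum_ite, Finset.sum_const, Finset.sum_const]
  rw [Finset.filter_mem_eq_inter, Finset.inter_eq_right.mpr hT]
  rw [Finset.filter_not, Finset.filter_mem_eq_inter, Finset.inter_eq_right.mpr hT,
    Finset.card_sdiff_of_subset hT]
  have := Finset.card_le_card hT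
  rw [nsmul_eq_mul, nsmul_eq_mul, Nat.cast_sub this]
  ring

lemma chival {S T : Finset (Fin d)} (hT : T ⊆ S) (u : Fin d → Bool)
    (hu : ∀ j ∈ S, (u j = false ↔ j ∈ T)) :
    chi S u = (-1 : ℝ) ^ T.card := by
  classical
  have h1 : chi S u = ∏ j ∈ S, (if j ∈ T then (-1 : ℝ) else 1) := by
    rw [chi]
    refine Finset.prod_congr rfl fun j hj => ?_
    by_cases h : j ∈ T
    · rw [if_pos h]
      have : u j = false := (hu j hj).mpr h
      simp [sgn, this]
    · rw [if_neg h]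
      have : u j ≠ false := fun hf => h ((hu j hj).mp hf)
      have : u j = true := by simpa using this
      simp [sgn, this]
  rw [h1, Finset.prod_ite, Finset.prod_const, Finset.prod_const, one_pow, mul_one,
    Finset.filter_mem_eq_inter, Finset.inter_eq_right.mpr hT]

end Stmt12

namespace Stmt12
variable {d : ℕ}

lemma CS_card (S : Finset (Fin d)) : (CS S).card = 2 ^ S.card := by
  classical
  rw [← Finset.card_powerset]
  refine Finset.card_nbij' (fun u => S.filter fun j => u j = false)
    (fun T k => decide (k ∉ T)) ?_ ?_ ?_ ?_
  · intro u _; exact Finset.mem_powerset.mpr (Finset.filter_subset _ _)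
  · intro T hT
    rw [Finset.mem_coe, mem_CS]
    intro j hj
    have hTS := Finset.mem_powerset.mp hT
    simp only [decide_eq_true_iff]
    exact fun hjT => hj (hTS hjT)
  · intro u hu
    funext k
    rw [Finset.mem_coe, mem_CS] at hu
    by_cases hk : k ∈ S
    · by_cases hv : u k = true
      · simp [hk, hv]
      · have hv' : u k = false := by simpa using hv
        simp [hk, hv']
    · simp [hk, hu k hk]
  · intro T hT
    have hTS := Finset.mem_powerset.mp hT
    ext j
    simp only [Finset.mem_filter, decide_eq_false_iff_not, not_not]
    exact ⟨fun h => h.2, fun h => ⟨hTS h, h⟩⟩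

lemma Kval {S : Finset (Fin d)} {s : ℕ} (hS : S.card = s) :
    ∑ u ∈ CS S, bump (∑ j ∈ S, sgn (u j)) * chi S u
      = (-1 : ℝ) ^ (s / 2) * (s.choose (s / 2) : ℝ) := by
  classical
  subst hS
  have h1 : ∑ u ∈ CS S, bump (∑ j ∈ S, sgn (u j)) * chi S u
      = ∑ T ∈ S.powerset,
          (if T.card = S.card / 2 then (1 : ℝ) else 0) * (-1) ^ T.card := by
    refine Finset.sum_nbij' (fun u => S.filter fun j => u j = false)
      (fun T k => decide (k ∉ T)) ?_ ?_ ?_ ?_ ?_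
    · intro u _; exact Finset.mem_powerset.mpr (Finset.filter_subset _ _)
    · intro T hT
      rw [mem_CS]
      intro j hj
      have hTS := Finset.mem_powerset.mp hT
      simp only [decide_eq_true_iff]
      exact fun hjT => hj (hTS hjT)
    · intro u hu
      funext k
      rw [mem_CS] at hu
      by_cases hk : k ∈ S
      · by_cases hv : u k = true
        · simp [hk, hv]
        · have hv' : u k = false := by simpa using hv
          simp [hk, hv']
      · simp [hk, hu k hk]
    · intro T hT
      have hTS := Finset.mem_powerset.mp hT
      ext j
      simp only [Finset.mem_filter, decide_eq_false_iff_not, not_not]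
      exact ⟨fun h => h.2, fun h => ⟨hTS h, h⟩⟩
    · intro u hu
      set T := S.filter fun j => u j = false with hTdef
      have hT : T ⊆ S := Finset.filter_subset _ _
      have hu' : ∀ j ∈ S, (u j = false ↔ j ∈ T) := by
        intro j hj
        simp [hTdef, hj]
      rw [sumsgn hT u hu', chival hT u hu', bump_nat]
  rw [h1]
  have h2 : ∀ T ∈ S.powerset,
      (if T.card = S.card / 2 then (1 : ℝ) else 0) * (-1) ^ T.card
        = if T.card = S.card / 2 then ((-1 : ℝ)) ^ T.card else 0 := by
    intro T _
    split <;> simp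
  rw [Finset.sum_congr rfl h2, ← Finset.sum_filter, ← Finset.powersetCard_eq_filter]
  have h3 : ∀ T ∈ Finset.powersetCard (S.card / 2) S,
      ((-1 : ℝ)) ^ T.card = (-1 : ℝ) ^ (S.card / 2) := by
    intro T hT
    rw [(Finset.mem_powersetCard.mp hT).2]
  rw [Finset.sum_congr rfl h3, Finset.sum_const, Finset.card_powersetCard, nsmul_eq_mul,
    mul_comm]

end Stmt12

namespace Stmt12
variable {d : ℕ}

/-- Sign-flip bijection of canonical patterns. -/
def flipb (S : Finset (Fin d)) (x ε : Fin d → Bool) : Fin d → Bool :=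
  fun j => if j ∈ S then (ε j == x j) else true

lemma flipb_mem (S : Finset (Fin d)) (x ε : Fin d → Bool) : flipb S x ε ∈ CS S := by
  rw [mem_CS]; intro j hj; simp [flipb, hj]

lemma flipb_flipb (S : Finset (Fin d)) (x : Fin d → Bool) {ε : Fin d → Bool}
    (hε : ε ∈ CS S) : flipb S x (flipb S x ε) = ε := by
  rw [mem_CS] at hε
  funext j
  by_cases hj : j ∈ S
  · simp only [flipb, if_pos hj]
    cases ε j <;> cases x j <;> rfl
  · simp [flipb, hj, hε j hj]

lemma inner_sub (S : Finset (Fin d)) (x : Fin d → Bool) :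
    ∑ ε ∈ CS S, bump (∑ j ∈ S, sgn (ε j) * sgn (x j)) * chi S ε
      = chi S x * ∑ u ∈ CS S, bump (∑ j ∈ S, sgn (u j)) * chi S u := by
  rw [Finset.mul_sum]
  refine Finset.sum_nbij' (flipb S x) (flipb S x)
    (fun ε _ => flipb_mem S x ε) (fun u _ => flipb_mem S x u)
    (fun ε hε => flipb_flipb S x hε) (fun u hu => flipb_flipb S x hu) ?_
  intro ε hε
  have h1 : ∑ j ∈ S, sgn (flipb S x ε j) = ∑ j ∈ S, sgn (ε j) * sgn (x j) :=
    Finset.sum_congr rfl fun j hj => by simp [flipb, hj, sgn_beq]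
  have h2 : chi S (flipb S x ε) = chi S ε * chi S x := by
    rw [chi, chi, chi, ← Finset.prod_mul_distrib]
    exact Finset.prod_congr rfl fun j hj => by simp [flipb, hj, sgn_beq]
  rw [h1, h2]
  have h3 : chi S x * (bump (∑ j ∈ S, sgn (ε j) * sgn (x j)) * (chi S ε * chi S x))
      = chi S x ^ 2 * (bump (∑ j ∈ S, sgn (ε j) * sgn (x j)) * chi S ε) := by ring
  rw [h3, chi_sq, one_mul]

lemma lemA (f : (Fin d → Bool) → ℝ) (S : Finset (Fin d)) :
    ∑ ε ∈ CS S, hcE (fun x => f x * bump (∑ j, pt S ε j * sgn (x j))) * chi S ε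
      = (∑ u ∈ CS S, bump (∑ j ∈ S, sgn (u j)) * chi S u) * fourierCoef f S := by
  classical
  set K : ℝ := ∑ u ∈ CS S, bump (∑ j ∈ S, sgn (u j)) * chi S u with hK
  calc ∑ ε ∈ CS S, hcE (fun x => f x * bump (∑ j, pt S ε j * sgn (x j))) * chi S ε
      = (∑ ε ∈ CS S, ∑ x : Fin d → Bool,
          f x * (bump (∑ j ∈ S, sgn (ε j) * sgn (x j)) * chi S ε)) / 2 ^ d := by
        rw [Finset.sum_div]
        refine Finset.sum_congr rfl fun ε _ => ?_
        rw [hcE, div_mul_eq_mul_div, Finset.sum_mul]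
        congr 1
        refine Finset.sum_congr rfl fun x _ => ?_
        rw [sum_pt, mul_assoc]
    _ = (∑ x : Fin d → Bool, f x *
          (chi S x * K)) / 2 ^ d := by
        rw [Finset.sum_comm]
        congr 1
        refine Finset.sum_congr rfl fun x _ => ?_
        rw [← Finset.mul_sum, inner_sub]
    _ = K * fourierCoef f S := by
        rw [fourierCoef, hcE, ← mul_div_assoc, Finset.mul_sum]
        congr 1
        refine Finset.sum_congr rfl fun x _ => ?_
        ring

end Stmt12

namespace Stmt12
open MeasureTheory
variable {d : ℕ}

lemma bump_nonneg (z : ℝ) : 0 ≤ bump z := by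
  rw [bump]; split <;> norm_num

lemma bump_le_one (z : ℝ) : bump z ≤ 1 := by
  rw [bump]; split <;> norm_num

lemma bump_meas : Measurable bump := by
  have h : bump = fun z => if z ∈ Set.Icc (-0.5 : ℝ) 1.5 then (1 : ℝ) else 0 := rfl
  rw [h]
  exact Measurable.ite measurableSet_Icc measurable_const measurable_const

lemma coordLaw_isProb {p : ℝ} (h0 : 0 ≤ p) (h1 : p ≤ 1) :
    IsProbabilityMeasure (coordLaw p) := by
  constructor
  simp only [coordLaw, Measure.coe_add, Pi.add_apply, Measure.smul_apply,
    measure_univ, smul_eq_mul, mul_one]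
  rw [← ENNReal.ofReal_add (by linarith) (by linarith),
    ← ENNReal.ofReal_add (by linarith) (by linarith)]
  rw [show 1 - p + p / 2 + p / 2 = (1:ℝ) by ring, ENNReal.ofReal_one]

lemma coordLaw_zero (p : ℝ) : coordLaw p {0} = ENNReal.ofReal (1 - p) := by
  simp only [coordLaw, Measure.coe_add, Pi.add_apply, Measure.smul_apply,
    Measure.dirac_apply, Set.indicator_apply, Set.mem_singleton_iff, smul_eq_mul]
  norm_num

lemma coordLaw_one (p : ℝ) : coordLaw p {1} = ENNReal.ofReal (p / 2) := by
  simp only [coordLaw, Measure.coe_add, Pi.add_apply, Measure.smul_apply,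
    Measure.dirac_apply, Set.indicator_apply, Set.mem_singleton_iff, smul_eq_mul]
  norm_num

lemma coordLaw_negone (p : ℝ) : coordLaw p {-1} = ENNReal.ofReal (p / 2) := by
  simp only [coordLaw, Measure.coe_add, Pi.add_apply, Measure.smul_apply,
    Measure.dirac_apply, Set.indicator_apply, Set.mem_singleton_iff, smul_eq_mul]
  norm_num

lemma mu_pt {p : ℝ} (h0 : 0 ≤ p) (h1 : p ≤ 1) (S : Finset (Fin d)) (ε : Fin d → Bool) :
    Measure.pi (fun _ : Fin d => coordLaw p) {pt S ε}
      = ENNReal.ofReal ((p / 2) ^ S.card * (1 - p) ^ (d - S.card)) := by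
  classical
  haveI := coordLaw_isProb h0 h1
  rw [← Set.univ_pi_singleton, Measure.pi_pi]
  have hj : ∀ j, coordLaw p {pt S ε j}
      = if j ∈ S then ENNReal.ofReal (p / 2) else ENNReal.ofReal (1 - p) := by
    intro j
    by_cases hj : j ∈ S
    · rw [if_pos hj]
      cases hb : ε j
      · have : pt S ε j = -1 := by simp [pt, hj, hb, sgn]
        rw [this, coordLaw_negone]
      · have : pt S ε j = 1 := by simp [pt, hj, hb, sgn]
        rw [this, coordLaw_one]
    · rw [if_neg hj]
      have : pt S ε j = 0 := by simp [pt, hj]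
      rw [this, coordLaw_zero]
  rw [Finset.prod_congr rfl fun j _ => hj j, Finset.prod_ite, Finset.prod_const,
    Finset.prod_const, Finset.filter_mem_eq_inter, Finset.univ_inter, Finset.filter_not,
    Finset.filter_mem_eq_inter, Finset.univ_inter]
  have hcard : (Finset.univ \ S).card = d - S.card := by
    rw [Finset.card_sdiff_of_subset (Finset.subset_univ S), Finset.card_univ, Fintype.card_fin]
  rw [hcard, ← ENNReal.ofReal_pow (by linarith), ← ENNReal.ofReal_pow (by linarith),
    ← ENNReal.ofReal_mul (by positivity)]

end Stmt12

namespace Stmt12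

/-- Binomial-type terms `t m = C(d,m) s^m (d-s)^(d-m)` are maximized at `m = s`. -/
lemma tmode {d s : ℕ} (hs : s ≤ d) :
    ∀ m, m ≤ d → d.choose m * (s ^ m * (d - s) ^ (d - m))
      ≤ d.choose s * (s ^ s * (d - s) ^ (d - s)) := by
  set t : ℕ → ℕ := fun m => d.choose m * (s ^ m * (d - s) ^ (d - m)) with ht
  have hup : ∀ m, m + 1 ≤ s → t m ≤ t (m + 1) := by
    intro m hm
    refine Nat.le_of_mul_le_mul_right ?_ (Nat.succ_pos m)
    have hchoose : d.choose (m + 1) * (m + 1) = d.choose m * (d - m) :=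
      Nat.choose_succ_right_eq d m
    have hde : d - m = (d - (m + 1)) + 1 := by omega
    calc t m * (m + 1)
        = d.choose m * s ^ m * (d - s) ^ (d - (m + 1)) * ((m + 1) * (d - s)) := by
          simp only [ht]; rw [hde, pow_succ]; ring
      _ ≤ d.choose m * s ^ m * (d - s) ^ (d - (m + 1)) * (s * (d - m)) := by
          apply Nat.mul_le_mul_left
          exact Nat.mul_le_mul hm (by omega)
      _ = d.choose m * (d - m) * (s ^ (m + 1) * (d - s) ^ (d - (m + 1))) := by
          rw [pow_succ]; ring
      _ = d.choose (m + 1) * (m + 1) * (s ^ (m + 1) * (d - s) ^ (d - (m + 1))) := by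
          rw [hchoose]
      _ = t (m + 1) * (m + 1) := by simp only [ht]; ring
  have hdown : ∀ m, s ≤ m → t (m + 1) ≤ t m := by
    intro m hm
    by_cases hmd : m < d
    · refine Nat.le_of_mul_le_mul_right ?_ (Nat.succ_pos m)
      have hchoose : d.choose (m + 1) * (m + 1) = d.choose m * (d - m) :=
        Nat.choose_succ_right_eq d m
      have hde : d - m = (d - (m + 1)) + 1 := by omega
      calc t (m + 1) * (m + 1)
          = d.choose (m + 1) * (m + 1) * (s ^ (m + 1) * (d - s) ^ (d - (m + 1))) := by
            simp only [ht]; ring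
        _ = d.choose m * (d - m) * (s ^ (m + 1) * (d - s) ^ (d - (m + 1))) := by
            rw [hchoose]
        _ = d.choose m * s ^ m * (d - s) ^ (d - (m + 1)) * ((d - m) * s) := by
            rw [pow_succ]; ring
        _ ≤ d.choose m * s ^ m * (d - s) ^ (d - (m + 1)) * ((d - s) * (m + 1)) := by
            apply Nat.mul_le_mul_left
            exact Nat.mul_le_mul (by omega) (by omega)
        _ = t m * (m + 1) := by
            simp only [ht]; rw [hde, pow_succ]; ring
    · have h0 : d.choose (m + 1) = 0 := Nat.choose_eq_zero_of_lt (by omega)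
      simp only [ht]
      rw [h0, Nat.zero_mul]
      exact Nat.zero_le _
  have hle : ∀ k, k ≤ s → t (s - k) ≤ t s := by
    intro k
    induction k with
    | zero => intro _; simp
    | succ n ih =>
      intro hk
      have h1 : s - (n + 1) + 1 = s - n := by omega
      calc t (s - (n + 1)) ≤ t (s - (n + 1) + 1) := hup _ (by omega)
        _ = t (s - n) := by rw [h1]
        _ ≤ t s := ih (by omega)
  have hge : ∀ m, s ≤ m → t m ≤ t s := by
    intro m
    induction m with
    | zero =>
      intro h
      have h0 : s = 0 := Nat.le_zero.mp h
      rw [h0]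
    | succ n ih =>
      intro h
      rcases Nat.lt_or_ge s (n + 1) with h' | h'
      · exact le_trans (hdown n (by omega)) (ih (by omega))
      · have h0 : s = n + 1 := by omega
        rw [h0]
  intro m _
  rcases Nat.le_total m s with h | h
  · have h2 := hle (s - m) (by omega)
    rwa [Nat.sub_sub_self h] at h2
  · exact hge m h

lemma N1 {d s : ℕ} (hs : s ≤ d) :
    d ^ d ≤ (d + 1) * (d.choose s * (s ^ s * (d - s) ^ (d - s))) := by
  have hbin := (Commute.all (s : ℕ) (d - s)).add_pow d
  have hsd : s + (d - s) = d := by omega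
  calc d ^ d = (s + (d - s)) ^ d := by rw [hsd]
    _ = ∑ m ∈ Finset.range (d + 1), s ^ m * (d - s) ^ (d - m) * d.choose m := hbin
    _ ≤ ∑ m ∈ Finset.range (d + 1), d.choose s * (s ^ s * (d - s) ^ (d - s)) := by
        apply Finset.sum_le_sum
        intro m hm
        have hm' : m ≤ d := Nat.lt_succ_iff.mp (Finset.mem_range.mp hm)
        calc s ^ m * (d - s) ^ (d - m) * d.choose m
            = d.choose m * (s ^ m * (d - s) ^ (d - m)) := by ring
          _ ≤ _ := tmode hs m hm'
    _ = (d + 1) * (d.choose s * (s ^ s * (d - s) ^ (d - s))) := by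
        rw [Finset.sum_const, Finset.card_range, smul_eq_mul]

lemma N2 (s : ℕ) : 2 ^ s ≤ (s + 1) * s.choose (s / 2) := by
  calc 2 ^ s = ∑ i ∈ Finset.range (s + 1), s.choose i := (Nat.sum_range_choose s).symm
    _ ≤ ∑ i ∈ Finset.range (s + 1), s.choose (s / 2) :=
        Finset.sum_le_sum fun i _ => Nat.choose_le_middle i s
    _ = (s + 1) * s.choose (s / 2) := by
        rw [Finset.sum_const, Finset.card_range, smul_eq_mul]

end Stmt12

namespace Stmt12

lemma scalar_key {d s : ℕ} (hd : 1 ≤ d) (hs : s ≤ d) :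
    ((d : ℝ) + 1)⁻¹ ^ 4 * ((d.choose s : ℝ))⁻¹ ^ 2
      ≤ ((s : ℝ) / d / 2) ^ s * (1 - (s : ℝ) / d) ^ (d - s)
          * ((s.choose (s / 2) : ℝ)) ^ 2 / 2 ^ s := by
  have hd0 : (0 : ℝ) < d := by exact_mod_cast hd
  set C : ℝ := (d.choose s : ℝ) with hC
  set B : ℝ := (s.choose (s / 2) : ℝ) with hB
  have hC1 : (1 : ℝ) ≤ C := by
    rw [hC]; exact_mod_cast Nat.choose_pos hs
  have hB1 : (1 : ℝ) ≤ B := by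
    rw [hB]; exact_mod_cast Nat.choose_pos (Nat.div_le_self s 2)
  have hq : 1 - (s : ℝ) / d = ((d - s : ℕ) : ℝ) / d := by
    rw [Nat.cast_sub hs]; field_simp
  set G : ℝ := ((s : ℝ) / d) ^ s * (1 - (s : ℝ) / d) ^ (d - s) with hG
  have hGeq : G = (s : ℝ) ^ s * ((d - s : ℕ) : ℝ) ^ (d - s) / (d : ℝ) ^ d := by
    rw [hG, hq, div_pow, div_pow, div_mul_div_comm, ← pow_add,
      Nat.add_sub_cancel' hs]
  have hG0 : 0 ≤ G := by
    rw [hGeq]; positivity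
  -- N1 cast
  have hN1 : (d : ℝ) ^ d ≤ ((d : ℝ) + 1) * (C * ((s : ℝ) ^ s * ((d - s : ℕ) : ℝ) ^ (d - s))) := by
    have := N1 hs
    have := (Nat.cast_le (α := ℝ)).mpr this
    push_cast at this
    convert this using 2 <;> push_cast <;> ring
  have hG1 : 1 ≤ G * (((d : ℝ) + 1) * C) := by
    rw [hGeq, div_mul_eq_mul_div, le_div_iff₀ (by positivity)]
    rw [one_mul]
    nlinarith [hN1]
  -- N2 cast
  have hN2 : (2 : ℝ) ^ s ≤ ((s : ℝ) + 1) * B := by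
    have := N2 s
    have := (Nat.cast_le (α := ℝ)).mpr this
    push_cast at this
    convert this using 2 <;> push_cast <;> ring
  have hE2 : (4 : ℝ) ^ s ≤ B ^ 2 * ((s : ℝ) + 1) ^ 2 := by
    have h2 : (0 : ℝ) ≤ 2 ^ s := by positivity
    calc (4 : ℝ) ^ s = ((2 : ℝ) ^ s) ^ 2 := by
          rw [show (4 : ℝ) = 2 ^ 2 by norm_num, ← pow_mul, ← pow_mul, mul_comm]
      _ ≤ (((s : ℝ) + 1) * B) ^ 2 := pow_le_pow_left₀ h2 hN2 2
      _ = B ^ 2 * ((s : ℝ) + 1) ^ 2 := by ring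
  have hsd : (s : ℝ) + 1 ≤ (d : ℝ) + 1 := by
    have : (s : ℝ) ≤ d := by exact_mod_cast hs
    linarith
  have hDC : (1 : ℝ) ≤ ((d : ℝ) + 1) * C := by nlinarith
  have key : (4 : ℝ) ^ s ≤ G * B ^ 2 * (((d : ℝ) + 1) ^ 4 * C ^ 2) := by
    calc (4 : ℝ) ^ s ≤ B ^ 2 * ((s : ℝ) + 1) ^ 2 := hE2
      _ ≤ B ^ 2 * ((d : ℝ) + 1) ^ 2 := by
          apply mul_le_mul_of_nonneg_left _ (by positivity)
          apply pow_le_pow_left₀ (by positivity) hsd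
      _ ≤ (B ^ 2 * ((d : ℝ) + 1) ^ 2) * ((G * (((d : ℝ) + 1) * C)) * (((d : ℝ) + 1) * C)) := by
          apply le_mul_of_one_le_right (by positivity)
          nlinarith
      _ = G * B ^ 2 * (((d : ℝ) + 1) ^ 4 * C ^ 2) := by ring
  have h4 : (0 : ℝ) < (4 : ℝ) ^ s := by positivity
  have hY : (0 : ℝ) < ((d : ℝ) + 1) ^ 4 * C ^ 2 := by positivity
  calc ((d : ℝ) + 1)⁻¹ ^ 4 * C⁻¹ ^ 2 = 1 / (((d : ℝ) + 1) ^ 4 * C ^ 2) := by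
        rw [one_div, inv_pow, inv_pow, ← mul_inv]
    _ ≤ G * B ^ 2 / 4 ^ s := by
        rw [div_le_div_iff₀ hY h4]
        linarith [key]
    _ = ((s : ℝ) / d / 2) ^ s * (1 - (s : ℝ) / d) ^ (d - s) * B ^ 2 / 2 ^ s := by
        have h44 : (4 : ℝ) ^ s = 2 ^ s * 2 ^ s := by rw [← mul_pow]; norm_num
        rw [hG, h44, div_pow ((s : ℝ) / d) 2]
        ring
end Stmt12

end Aux

open Stmt12

/-- **Claim in Lemma D.3 (random sparse sign features correlate with every degree-`s`
Fourier level; proof-faithful version).** With `p = s/d` and `w` having i.i.d.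
coordinates from `coordLaw p`,
`E_w[(E_{x∼H_d}[f(x) σ(⟨w,x⟩)])²] ≥ (d+1)^{−4} C(d,s)^{−2} Σ_{|S|=s} f̂(S)²`. -/
theorem stmt_12 {d : ℕ} (hd : 1 ≤ d) (f : (Fin d → Bool) → ℝ) (s : ℕ) (hs : s ≤ d) :
    ((d : ℝ) + 1)⁻¹ ^ 4 * ((d.choose s : ℝ))⁻¹ ^ 2 *
        ∑ S ∈ Finset.univ.filter (fun S : Finset (Fin d) => S.card = s),
          fourierCoef f S ^ 2
      ≤ ∫ w : Fin d → ℝ,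
          (hcE fun x => f x * bump (∑ j, w j * sgn (x j))) ^ 2
          ∂(Measure.pi fun _ : Fin d => coordLaw ((s : ℝ) / d)) := by
  classical
  have hd0 : (0 : ℝ) < d := by exact_mod_cast hd
  set p : ℝ := (s : ℝ) / d with hp
  have hp0 : 0 ≤ p := by positivity
  have hp1 : p ≤ 1 := by
    rw [hp, div_le_one hd0]
    exact_mod_cast hs
  haveI hprob : IsProbabilityMeasure (coordLaw p) := coordLaw_isProb hp0 hp1
  set μ : Measure (Fin d → ℝ) := Measure.pi (fun _ : Fin d => coordLaw p) with hμ
  haveI : IsProbabilityMeasure μ := by rw [hμ]; infer_instance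
  set F : (Fin d → ℝ) → ℝ :=
    fun w => (hcE fun x => f x * bump (∑ j, w j * sgn (x j))) ^ 2 with hF
  have hFnn : ∀ w, 0 ≤ F w := fun w => sq_nonneg _
  have hFmeas : Measurable F := by
    simp only [hF, hcE]
    apply Measurable.pow_const
    apply Measurable.div_const
    apply Finset.measurable_sum
    intro x _
    apply Measurable.const_mul
    exact bump_meas.comp (Finset.measurable_sum _ fun j _ =>
      (measurable_pi_apply j).mul_const _)
  have hFbd : ∀ w, ‖F w‖ ≤ ((∑ x : Fin d → Bool, |f x|) / 2 ^ d) ^ 2 := by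
    intro w
    rw [Real.norm_eq_abs, abs_of_nonneg (hFnn w)]
    simp only [hF]
    have hb : |hcE fun x => f x * bump (∑ j, w j * sgn (x j))|
        ≤ (∑ x : Fin d → Bool, |f x|) / 2 ^ d := by
      rw [hcE, abs_div, abs_of_nonneg (by positivity : (0 : ℝ) ≤ (2 : ℝ) ^ d)]
      gcongr
      calc |∑ x : Fin d → Bool, f x * bump (∑ j, w j * sgn (x j))|
          ≤ ∑ x : Fin d → Bool, |f x * bump (∑ j, w j * sgn (x j))| :=
            Finset.abs_sum_le_sum_abs _ _
        _ ≤ ∑ x : Fin d → Bool, |f x| := by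
            apply Finset.sum_le_sum
            intro x _
            rw [abs_mul]
            have h1 : |bump (∑ j, w j * sgn (x j))| ≤ 1 :=
              abs_le.mpr ⟨by linarith [bump_nonneg (∑ j, w j * sgn (x j))],
                bump_le_one _⟩
            calc |f x| * |bump (∑ j, w j * sgn (x j))| ≤ |f x| * 1 :=
                  mul_le_mul_of_nonneg_left h1 (abs_nonneg _)
              _ = |f x| := mul_one _
    calc (hcE fun x => f x * bump (∑ j, w j * sgn (x j))) ^ 2
        = |hcE fun x => f x * bump (∑ j, w j * sgn (x j))| ^ 2 := (sq_abs _).symm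
      _ ≤ ((∑ x : Fin d → Bool, |f x|) / 2 ^ d) ^ 2 :=
          pow_le_pow_left₀ (abs_nonneg _) hb 2
  have hFint : Integrable F μ :=
    Integrable.mono' (integrable_const _) hFmeas.aestronglyMeasurable
      (Filter.Eventually.of_forall hFbd)
  set D : Finset (Finset (Fin d) × (Fin d → Bool)) :=
    Finset.univ.filter (fun q => q.1.card = s ∧ ∀ j ∉ q.1, q.2 j = true) with hD
  -- injectivity of the atom map on D
  have hptinj : ∀ q ∈ D, ∀ r ∈ D, pt q.1 q.2 = pt r.1 r.2 → q = r := by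
    rintro ⟨S, ε⟩ hq ⟨S', ε'⟩ hr hpt
    simp only [hD, Finset.mem_filter, Finset.mem_univ, true_and] at hq hr
    obtain ⟨hq1, hq2⟩ := hq
    obtain ⟨hr1, hr2⟩ := hr
    have hSS : S = S' := by
      ext j
      constructor
      · intro hj
        by_contra hj'
        have hc := congrFun hpt j
        simp only [pt, if_pos hj, if_neg hj'] at hc
        cases hjb : ε j <;> rw [hjb] at hc <;> norm_num [sgn] at hc
      · intro hj
        by_contra hj'
        have hc := congrFun hpt j
        simp only [pt, if_neg hj', if_pos hj] at hc
        cases hjb : ε' j <;> rw [hjb] at hc <;> norm_num [sgn] at hc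
    subst hSS
    have hεε : ε = ε' := by
      funext j
      by_cases hj : j ∈ S
      · have hc := congrFun hpt j
        simp only [pt, if_pos hj] at hc
        cases h1 : ε j <;> cases h2 : ε' j <;> rw [h1, h2] at hc <;>
          first | rfl | (norm_num [sgn] at hc)
      · rw [hq2 j hj, hr2 j hj]
    rw [hεε]
  -- lower bound the integral by the sum over the atoms indexed by D
  have hle1 : ∑ q ∈ D, (μ {pt q.1 q.2}).toReal * F (pt q.1 q.2) ≤ ∫ w, F w ∂μ := by
    have hA : ∑ a ∈ D.image (fun q => pt q.1 q.2), (μ {a}).toReal * F a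
        = ∑ q ∈ D, (μ {pt q.1 q.2}).toReal * F (pt q.1 q.2) :=
      Finset.sum_image hptinj
    have hintA : ∫ x in (D.image fun q => pt q.1 q.2 : Finset (Fin d → ℝ)), F x ∂μ
        = ∑ a ∈ D.image (fun q => pt q.1 q.2), (μ {a}).toReal * F a := by
      rw [integral_finset (hf := hFint.integrableOn)]
      simp only [smul_eq_mul, Measure.real]
    rw [← hA, ← hintA]
    exact setIntegral_le_integral hFint (Filter.Eventually.of_forall hFnn)
  -- regroup the sum over D
  have hsplit : ∑ q ∈ D, (μ {pt q.1 q.2}).toReal * F (pt q.1 q.2)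
      = ∑ S ∈ Finset.univ.filter (fun S : Finset (Fin d) => S.card = s),
          ∑ ε ∈ CS S, (μ {pt S ε}).toReal * F (pt S ε) := by
    exact Finset.sum_finset_product' (f := fun S ε => (μ {pt S ε}).toReal * F (pt S ε)) D
      (Finset.univ.filter fun S : Finset (Fin d) => S.card = s) (fun S => CS S)
      (fun q => by
        simp only [hD, Finset.mem_filter, Finset.mem_univ, true_and, mem_CS])
  -- per-S lower bound
  have hperS : ∀ S ∈ Finset.univ.filter (fun S : Finset (Fin d) => S.card = s),
      ((d : ℝ) + 1)⁻¹ ^ 4 * ((d.choose s : ℝ))⁻¹ ^ 2 * fourierCoef f S ^ 2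
        ≤ ∑ ε ∈ CS S, (μ {pt S ε}).toReal * F (pt S ε) := by
    intro S hS
    have hSc : S.card = s := (Finset.mem_filter.mp hS).2
    have hW0' : (0:ℝ) ≤ (p / 2) ^ s * (1 - p) ^ (d - s) :=
      mul_nonneg (pow_nonneg (by linarith) _) (pow_nonneg (by linarith) _)
    have hW : ∀ ε : Fin d → Bool,
        (μ {pt S ε}).toReal = (p / 2) ^ s * (1 - p) ^ (d - s) := by
      intro ε
      have hmp := mu_pt (d := d) hp0 hp1 S ε
      rw [hSc] at hmp
      rw [hμ, hmp, ENNReal.toReal_ofReal hW0']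
    have hrw : ∑ ε ∈ CS S, (μ {pt S ε}).toReal * F (pt S ε)
        = (p / 2) ^ s * (1 - p) ^ (d - s) *
            ∑ ε ∈ CS S, (hcE fun x => f x * bump (∑ j, pt S ε j * sgn (x j))) ^ 2 := by
      rw [Finset.mul_sum]
      exact Finset.sum_congr rfl fun ε _ => by rw [hW ε]
    have hchi : ∑ ε ∈ CS S, chi S ε ^ 2 = 2 ^ s := by
      rw [Finset.sum_congr rfl (fun ε _ => chi_sq S ε), Finset.sum_const, CS_card, hSc,
        nsmul_eq_mul, mul_one]
      push_cast
      ring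
    have hT := lemA f S
    have hk := Kval hSc
    have em : ((-1 : ℝ) ^ (s / 2)) ^ 2 = 1 := by
      rw [← pow_mul, mul_comm, pow_mul]
      norm_num
    have e1 : (∑ ε ∈ CS S,
          hcE (fun x => f x * bump (∑ j, pt S ε j * sgn (x j))) * chi S ε) ^ 2
        = ((s.choose (s / 2) : ℝ)) ^ 2 * fourierCoef f S ^ 2 := by
      rw [hT, hk, mul_pow, mul_pow, em, one_mul]
    have hcs := Finset.sum_mul_sq_le_sq_mul_sq (CS S)
      (fun ε => hcE fun x => f x * bump (∑ j, pt S ε j * sgn (x j))) (chi S)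
    have hsum2 : ((s.choose (s / 2) : ℝ)) ^ 2 * fourierCoef f S ^ 2
        ≤ (∑ ε ∈ CS S, (hcE fun x => f x * bump (∑ j, pt S ε j * sgn (x j))) ^ 2)
            * 2 ^ s := by
      rw [← e1, ← hchi]
      exact hcs
    have h2s : (0 : ℝ) < 2 ^ s := by positivity
    have hkey := scalar_key hd hs
    have hkey' : ((d : ℝ) + 1)⁻¹ ^ 4 * ((d.choose s : ℝ))⁻¹ ^ 2
        ≤ (p / 2) ^ s * (1 - p) ^ (d - s) * ((s.choose (s / 2) : ℝ)) ^ 2 / 2 ^ s := by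
      rw [hp]
      exact hkey
    calc ((d : ℝ) + 1)⁻¹ ^ 4 * ((d.choose s : ℝ))⁻¹ ^ 2 * fourierCoef f S ^ 2
        ≤ ((p / 2) ^ s * (1 - p) ^ (d - s) * ((s.choose (s / 2) : ℝ)) ^ 2 / 2 ^ s)
            * fourierCoef f S ^ 2 :=
          mul_le_mul_of_nonneg_right hkey' (sq_nonneg _)
      _ ≤ (p / 2) ^ s * (1 - p) ^ (d - s) *
            ∑ ε ∈ CS S, (hcE fun x => f x * bump (∑ j, pt S ε j * sgn (x j))) ^ 2 := by
          rw [div_mul_eq_mul_div, div_le_iff₀ h2s]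
          calc (p / 2) ^ s * (1 - p) ^ (d - s) * ((s.choose (s / 2) : ℝ)) ^ 2
                * fourierCoef f S ^ 2
              = ((p / 2) ^ s * (1 - p) ^ (d - s)) *
                  (((s.choose (s / 2) : ℝ)) ^ 2 * fourierCoef f S ^ 2) := by ring
            _ ≤ ((p / 2) ^ s * (1 - p) ^ (d - s)) *
                  ((∑ ε ∈ CS S,
                    (hcE fun x => f x * bump (∑ j, pt S ε j * sgn (x j))) ^ 2) * 2 ^ s) :=
                mul_le_mul_of_nonneg_left hsum2 hW0'
            _ = (p / 2) ^ s * (1 - p) ^ (d - s) *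
                  (∑ ε ∈ CS S,
                    (hcE fun x => f x * bump (∑ j, pt S ε j * sgn (x j))) ^ 2) * 2 ^ s := by
                ring
      _ = ∑ ε ∈ CS S, (μ {pt S ε}).toReal * F (pt S ε) := hrw.symm
  calc ((d : ℝ) + 1)⁻¹ ^ 4 * ((d.choose s : ℝ))⁻¹ ^ 2 *
        ∑ S ∈ Finset.univ.filter (fun S : Finset (Fin d) => S.card = s),
          fourierCoef f S ^ 2
      = ∑ S ∈ Finset.univ.filter (fun S : Finset (Fin d) => S.card = s),
          ((d : ℝ) + 1)⁻¹ ^ 4 * ((d.choose s : ℝ))⁻¹ ^ 2 * fourierCoef f S ^ 2 :=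
        Finset.mul_sum _ _ _
    _ ≤ ∑ S ∈ Finset.univ.filter (fun S : Finset (Fin d) => S.card = s),
          ∑ ε ∈ CS S, (μ {pt S ε}).toReal * F (pt S ε) :=
        Finset.sum_le_sum hperS
    _ = ∑ q ∈ D, (μ {pt q.1 q.2}).toReal * F (pt q.1 q.2) := hsplit.symm
    _ ≤ ∫ w, F w ∂μ := hle1


end
end
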